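/- arXiv:1610.07388 — 2 statements merged into one kernel-verified Lean document; each statement's English description precedes it below -/
import Mathlib

section
/- The Koczkodaj inconsistency ranking satisfies homogeneous treatment of entities: for every triad T = (1; t2; t3), the triads (1; t2; t3) and (1; t2/t3; 1) are equivalent under ⪰^K. -/
open Matrix

/-- A pairwise comparison matrix (of size `n ≥ 3`): a positive reciprocal matrix. -/
structure PCM where
  n : ℕ
  hn : 3 ≤ n
  A : Matrix (Fin n) (Fin n) ℝ
  pos : ∀ i j, 0 < A i j
  recip : ∀ i j, A j i = 1 / A i j

/-- Index triples `i < j < k`. -/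
def triples (n : ℕ) : Finset (Fin n × Fin n × Fin n) :=
  Finset.univ.filter fun t => t.1 < t.2.1 ∧ t.2.1 < t.2.2

lemma triples_nonempty (n : ℕ) (hn : 3 ≤ n) : (triples n).Nonempty :=
  ⟨(⟨0, by omega⟩, ⟨1, by omega⟩, ⟨2, by omega⟩), by
    simp only [triples, Finset.mem_filter, Finset.mem_univ, true_and]
    exact ⟨Fin.mk_lt_mk.mpr (by omega), Fin.mk_lt_mk.mpr (by omega)⟩⟩

/-- The Koczkodaj ratio `K(A) = max_{i<j<k} max{a_ij a_jk / a_ik, a_ik/(a_ij a_jk)}`. -/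
noncomputable def KratioM {n : ℕ} (hn : 3 ≤ n) (A : Matrix (Fin n) (Fin n) ℝ) : ℝ :=
  (triples n).sup' (triples_nonempty n hn) fun t =>
    max (A t.1 t.2.1 * A t.2.1 t.2.2 / A t.1 t.2.2)
        (A t.1 t.2.2 / (A t.1 t.2.1 * A t.2.1 t.2.2))

noncomputable def Kratio (M : PCM) : ℝ := KratioM M.hn M.A

/-- The Koczkodaj inconsistency ranking: `A ⪰ᴷ B` iff `K(A) ≤ K(B)`. -/
noncomputable def KRank (M N : PCM) : Prop := Kratio M ≤ Kratio N

/-- The triad `(t1; t2; t3)` as a 3×3 pairwise comparison matrix. -/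
noncomputable def triad (t1 t2 t3 : ℝ) (h1 : 0 < t1) (h2 : 0 < t2) (h3 : 0 < t3) : PCM where
  n := 3
  hn := le_refl 3
  A := !![1, t1, t2; 1/t1, 1, t3; 1/t2, 1/t3, 1]
  pos := by
    intro i j
    fin_cases i <;> fin_cases j <;> simp <;> positivity
  recip := by
    intro i j
    fin_cases i <;> fin_cases j <;> simp [one_div_one_div]

/-- The transpose of a pairwise comparison matrix. -/
def PCM.tr (M : PCM) : PCM where
  n := M.n
  hn := M.hn
  A := M.A.transpose
  pos := by intro i j; rw [Matrix.transpose_apply]; exact M.pos j i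
  recip := by intro i j; rw [Matrix.transpose_apply, Matrix.transpose_apply]; exact M.recip j i

/-- The principal submatrix of `M` given by an index selection `σ`. -/
def subPCM (M : PCM) (m : ℕ) (hm : 3 ≤ m) (σ : Fin m → Fin M.n) : PCM where
  n := m
  hn := hm
  A := Matrix.of fun i j => M.A (σ i) (σ j)
  pos := fun i j => M.pos (σ i) (σ j)
  recip := fun i j => M.recip (σ i) (σ j)

/-- `T` is a triad (3×3 pairwise comparison submatrix) of `M`. -/
def IsTriadOf (T M : PCM) : Prop :=
  ∃ σ : Fin 3 → Fin M.n, Function.Injective σ ∧ T = subPCM M 3 (le_refl 3) σ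

/-- `B` is a pairwise comparison submatrix of `M` (of size `3 ≤ m < n`). -/
def IsSubPCM (B M : PCM) : Prop :=
  ∃ (m : ℕ) (hm : 3 ≤ m) (σ : Fin m → Fin M.n),
    m < M.n ∧ Function.Injective σ ∧ B = subPCM M m hm σ

/-- Equivalence (`∼`) derived from a ranking `⪰`. -/
def Sim (R : PCM → PCM → Prop) (M N : PCM) : Prop := R M N ∧ R N M

/-- Strict relation (`≻`) derived from a ranking `⪰`. -/
def Strict (R : PCM → PCM → Prop) (M N : PCM) : Prop := R M N ∧ ¬ R N M

/-- An inconsistency ranking is a total and transitive relation. -/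
def IsRanking (R : PCM → PCM → Prop) : Prop :=
  (∀ M N, R M N ∨ R N M) ∧ Transitive R

/-- Positive responsiveness. -/
noncomputable def PR (R : PCM → PCM → Prop) : Prop :=
  ∀ (s2 t2 : ℝ) (hs : 1 ≤ s2) (ht : 1 ≤ t2),
    (R (triad 1 s2 1 one_pos (lt_of_lt_of_le one_pos hs) one_pos)
       (triad 1 t2 1 one_pos (lt_of_lt_of_le one_pos ht) one_pos) ↔ s2 ≤ t2)

/-- Invariance under inversion of preferences. -/
noncomputable def IIP (R : PCM → PCM → Prop) : Prop :=
  ∀ (t1 t2 t3 : ℝ) (h1 : 0 < t1) (h2 : 0 < t2) (h3 : 0 < t3),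
    Sim R (triad t1 t2 t3 h1 h2 h3) (triad t1 t2 t3 h1 h2 h3).tr

/-- Homogeneous treatment of entities. -/
noncomputable def HTE (R : PCM → PCM → Prop) : Prop :=
  ∀ (t2 t3 : ℝ) (h2 : 0 < t2) (h3 : 0 < t3),
    Sim R (triad 1 t2 t3 one_pos h2 h3)
          (triad 1 (t2 / t3) 1 one_pos (div_pos h2 h3) one_pos)

/-- Scale invariance. -/
noncomputable def SI (R : PCM → PCM → Prop) : Prop :=
  ∀ (t1 t2 t3 k : ℝ) (h1 : 0 < t1) (h2 : 0 < t2) (h3 : 0 < t3) (hk : 0 < k),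
    Sim R (triad t1 t2 t3 h1 h2 h3)
          (triad (k * t1) (k ^ 2 * t2) (k * t3)
            (by positivity) (by positivity) (by positivity))

/-- Monotonicity: `A ⪯ T` for every triad `T` of `A`. -/
def MON (R : PCM → PCM → Prop) : Prop :=
  ∀ M T : PCM, IsTriadOf T M → R T M

/-- Reducibility: every pairwise comparison matrix is equivalent to one of its triads. -/
def RED (R : PCM → PCM → Prop) : Prop :=
  ∀ M : PCM, ∃ T : PCM, IsTriadOf T M ∧ Sim R M T

/-- `min`-based variant of the Koczkodaj ratio. -/
noncomputable def KminM {n : ℕ} (hn : 3 ≤ n) (A : Matrix (Fin n) (Fin n) ℝ) : ℝ :=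
  (triples n).inf' (triples_nonempty n hn) fun t =>
    max (A t.1 t.2.1 * A t.2.1 t.2.2 / A t.1 t.2.2)
        (A t.1 t.2.2 / (A t.1 t.2.1 * A t.2.1 t.2.2))

noncomputable def Kmin (M : PCM) : ℝ := KminM M.hn M.A

/-- Ranking of Example 1: `A ⪰¹ B` iff `Kmin A ≥ Kmin B`. -/
noncomputable def Rank1 (M N : PCM) : Prop := Kmin N ≤ Kmin M

/-- Upper-triangle-only variant of the Koczkodaj ratio. -/
noncomputable def K2M {n : ℕ} (hn : 3 ≤ n) (A : Matrix (Fin n) (Fin n) ℝ) : ℝ :=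
  (triples n).sup' (triples_nonempty n hn) fun t =>
    A t.1 t.2.1 * A t.2.1 t.2.2 / A t.1 t.2.2

noncomputable def K2 (M : PCM) : ℝ := K2M M.hn M.A

/-- Ranking of Example 2. -/
noncomputable def Rank2 (M N : PCM) : Prop := K2 M ≤ K2 N

noncomputable def K3M {n : ℕ} (hn : 3 ≤ n) (A : Matrix (Fin n) (Fin n) ℝ) : ℝ :=
  (triples n).sup' (triples_nonempty n hn) fun t =>
    max (A t.2.1 t.2.2 ^ 2 / A t.1 t.2.2) (A t.1 t.2.2 / A t.2.1 t.2.2 ^ 2)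

noncomputable def K3 (M : PCM) : ℝ := K3M M.hn M.A

/-- Ranking of Example 3. -/
noncomputable def Rank3 (M N : PCM) : Prop := K3 M ≤ K3 N

noncomputable def K4M {n : ℕ} (hn : 3 ≤ n) (A : Matrix (Fin n) (Fin n) ℝ) : ℝ :=
  (triples n).sup' (triples_nonempty n hn) fun t =>
    max (A t.2.1 t.2.2 / A t.1 t.2.2) (A t.1 t.2.2 / A t.2.1 t.2.2)

noncomputable def K4 (M : PCM) : ℝ := K4M M.hn M.A

/-- Ranking of Example 4. -/
noncomputable def Rank4 (M N : PCM) : Prop := K4 M ≤ K4 N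

/-- Ranking of Example 5: `A ⪰⁵ B` iff `Kmin A ≤ Kmin B`. -/
noncomputable def Rank5 (M N : PCM) : Prop := Kmin M ≤ Kmin N

/-- Ranking of Example 6: `A ⪰⁶ B` iff `K(A)ⁿ ≤ K(B)ᵐ`. -/
noncomputable def Rank6 (M N : PCM) : Prop := Kratio M ^ M.n ≤ Kratio N ^ N.n

/-- The Koczkodaj inconsistency index. -/
noncomputable def IKM {n : ℕ} (hn : 3 ≤ n) (A : Matrix (Fin n) (Fin n) ℝ) : ℝ :=
  (triples n).sup' (triples_nonempty n hn) fun t =>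
    min |1 - A t.1 t.2.2 / (A t.1 t.2.1 * A t.2.1 t.2.2)|
        |1 - A t.1 t.2.1 * A t.2.1 t.2.2 / A t.1 t.2.2|

noncomputable def IK (M : PCM) : ℝ := IKM M.hn M.A



lemma triples_three_eq : ∀ t ∈ triples 3, t = ((0 : Fin 3), (1 : Fin 3), (2 : Fin 3)) := by
  decide

lemma kratio_triad (t1 t2 t3 : ℝ) (h1 : 0 < t1) (h2 : 0 < t2) (h3 : 0 < t3) :
    Kratio (triad t1 t2 t3 h1 h2 h3) = max (t1 * t3 / t2) (t2 / (t1 * t3)) := by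
  have hmem : ((0 : Fin 3), (1 : Fin 3), (2 : Fin 3)) ∈ triples 3 := by decide
  have hval : ∀ t ∈ triples 3,
      (fun t : Fin 3 × Fin 3 × Fin 3 =>
        max ((triad t1 t2 t3 h1 h2 h3).A t.1 t.2.1 * (triad t1 t2 t3 h1 h2 h3).A t.2.1 t.2.2 /
              (triad t1 t2 t3 h1 h2 h3).A t.1 t.2.2)
            ((triad t1 t2 t3 h1 h2 h3).A t.1 t.2.2 /
              ((triad t1 t2 t3 h1 h2 h3).A t.1 t.2.1 * (triad t1 t2 t3 h1 h2 h3).A t.2.1 t.2.2)))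
        t = max (t1 * t3 / t2) (t2 / (t1 * t3)) := by
    intro t ht
    rw [triples_three_eq t ht]
    simp [triad, Matrix.cons_val_zero, Matrix.cons_val_one]
  unfold Kratio KratioM
  apply le_antisymm
  · exact Finset.sup'_le _ _ fun t ht => le_of_eq (hval t ht)
  · exact le_trans (le_of_eq (hval _ hmem).symm)
      (Finset.le_sup' (f := fun t : Fin 3 × Fin 3 × Fin 3 =>
        max ((triad t1 t2 t3 h1 h2 h3).A t.1 t.2.1 * (triad t1 t2 t3 h1 h2 h3).A t.2.1 t.2.2 /
              (triad t1 t2 t3 h1 h2 h3).A t.1 t.2.2)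
            ((triad t1 t2 t3 h1 h2 h3).A t.1 t.2.2 /
              ((triad t1 t2 t3 h1 h2 h3).A t.1 t.2.1 * (triad t1 t2 t3 h1 h2 h3).A t.2.1 t.2.2)))
        hmem)

/-- The Koczkodaj inconsistency ranking satisfies homogeneous treatment of entities:
`(1; t2; t3) ∼ (1; t2/t3; 1)`. -/
theorem koczkodaj_HTE :
    ∀ (t2 t3 : ℝ) (h2 : 0 < t2) (h3 : 0 < t3),
      KRank (triad 1 t2 t3 one_pos h2 h3)
            (triad 1 (t2 / t3) 1 one_pos (div_pos h2 h3) one_pos) ∧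
      KRank (triad 1 (t2 / t3) 1 one_pos (div_pos h2 h3) one_pos)
            (triad 1 t2 t3 one_pos h2 h3) := by
  intro t2 t3 h2 h3
  have e1 := kratio_triad 1 t2 t3 one_pos h2 h3
  have e2 := kratio_triad 1 (t2/t3) 1 one_pos (div_pos h2 h3) one_pos
  have key : max (1 * t3 / t2) (t2 / (1 * t3)) = max ((1:ℝ) * 1 / (t2/t3)) ((t2/t3) / (1*1)) := by
    rw [one_mul, one_mul, one_div_div]; simp
  constructor <;> unfold KRank <;> rw [e1, e2, key]
end

section
/- The inconsistency ranking ⪰⁵ defined by A ⪰⁵ B iff min_{i<j<k} max{ a_ij a_jk / a_ik , a_ik / (a_ij a_jk) } ≤ min_{i<j<k} max{ b_ij b_jk / b_ik , b_ik / (b_ij b_jk) } satisfies positive responsiveness, invariance under inversion of preferences, homogeneous treatment of entities, scale invariance and reducibility, but fails monotonicity. -/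
open Matrix

lemma triples3_eq : triples 3 = {(0,1,2)} := by decide

lemma kmin3 (h : (3:ℕ) ≤ 3) (A : Matrix (Fin 3) (Fin 3) ℝ) :
    KminM h A = max (A 0 1 * A 1 2 / A 0 2) (A 0 2 / (A 0 1 * A 1 2)) := by
  simp [KminM, triples3_eq]

lemma kmin_triad (t1 t2 t3 : ℝ) (h1 : 0 < t1) (h2 : 0 < t2) (h3 : 0 < t3) :
    Kmin (triad t1 t2 t3 h1 h2 h3) = max (t1 * t3 / t2) (t2 / (t1 * t3)) := by
  show KminM _ _ = _
  erw [kmin3]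
  simp [triad]

lemma kmin_triad_tr (t1 t2 t3 : ℝ) (h1 : 0 < t1) (h2 : 0 < t2) (h3 : 0 < t3) :
    Kmin (triad t1 t2 t3 h1 h2 h3).tr = max (t1 * t3 / t2) (t2 / (t1 * t3)) := by
  show KminM _ _ = _
  erw [kmin3]
  simp only [PCM.tr, triad, Matrix.transpose_apply]
  have e01 : (!![1, t1, t2; 1/t1, 1, t3; 1/t2, 1/t3, 1] : Matrix (Fin 3) (Fin 3) ℝ) 1 0 = 1/t1 := by
    simp
  have e12 : (!![1, t1, t2; 1/t1, 1, t3; 1/t2, 1/t3, 1] : Matrix (Fin 3) (Fin 3) ℝ) 2 1 = 1/t3 := by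
    simp
  have e02 : (!![1, t1, t2; 1/t1, 1, t3; 1/t2, 1/t3, 1] : Matrix (Fin 3) (Fin 3) ℝ) 2 0 = 1/t2 := by
    simp
  rw [e01, e12, e02]
  rw [max_comm]
  congr 1 <;> field_simp

lemma vec3_inj {α : Type*} {a b c : α} (hab : a ≠ b) (hac : a ≠ c) (hbc : b ≠ c) :
    Function.Injective (![a,b,c]) := by
  intro i j h
  fin_cases i <;> fin_cases j <;> simp_all

/-- A concrete 4×4 counterexample matrix for MON. -/
noncomputable def A4 : Matrix (Fin 4) (Fin 4) ℝ :=
  !![1, 2, 1, 1; 1/2, 1, 1, 1; 1, 1, 1, 1; 1, 1, 1, 1]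

/-- A concrete 4×4 counterexample PCM for MON. -/
noncomputable def M4 : PCM where
  n := 4
  hn := by norm_num
  A := A4
  pos := by
    intro i j
    fin_cases i <;> fin_cases j <;>
      norm_num [A4, Matrix.cons_val_two, Matrix.cons_val_three, Matrix.vecHead, Matrix.vecTail]
  recip := by
    intro i j
    fin_cases i <;> fin_cases j <;>
      norm_num [A4, Matrix.cons_val_two, Matrix.cons_val_three, Matrix.vecHead, Matrix.vecTail]

/-- Example 5: the ranking `⪰⁵` satisfies `PR`, `IIP`, `HTE`, `SI` and `RED`,
but fails `MON`. -/
theorem rank5_properties :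
    PR Rank5 ∧ IIP Rank5 ∧ HTE Rank5 ∧ SI Rank5 ∧ RED Rank5 ∧ ¬ MON Rank5 := by
  have hval : ∀ (s : ℝ) (hs : 1 ≤ s),
      Kmin (triad 1 s 1 one_pos (lt_of_lt_of_le one_pos hs) one_pos) = s := by
    intro s hs
    rw [kmin_triad]
    have hs0 : (0:ℝ) < s := by linarith
    have h1 : (1:ℝ) * 1 / s ≤ s := by
      rw [one_mul]
      have : (1:ℝ)/s ≤ 1 := by rw [div_le_one hs0]; exact hs
      linarith
    rw [max_eq_right]
    · simp
    · simpa using h1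
  refine ⟨?_, ?_, ?_, ?_, ?_, ?_⟩
  · -- PR
    intro s2 t2 hs ht
    unfold Rank5
    rw [hval s2 hs, hval t2 ht]
  · -- IIP
    intro t1 t2 t3 h1 h2 h3
    constructor <;> unfold Rank5 <;> rw [kmin_triad, kmin_triad_tr]
  · -- HTE
    intro t2 t3 h2 h3
    have key : Kmin (triad 1 t2 t3 one_pos h2 h3)
        = Kmin (triad 1 (t2/t3) 1 one_pos (div_pos h2 h3) one_pos) := by
      rw [kmin_triad, kmin_triad]
      simp [inv_div, one_div]
    exact ⟨le_of_eq key, le_of_eq key.symm⟩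
  · -- SI
    intro t1 t2 t3 k h1 h2 h3 hk
    have key : Kmin (triad t1 t2 t3 h1 h2 h3)
        = Kmin (triad (k*t1) (k^2*t2) (k*t3) (by positivity) (by positivity) (by positivity)) := by
      rw [kmin_triad, kmin_triad]
      congr 1 <;> · field_simp
    exact ⟨le_of_eq key, le_of_eq key.symm⟩
  · -- RED
    intro M
    obtain ⟨t, htmem, hEq⟩ := Finset.exists_mem_eq_inf' (triples_nonempty M.n M.hn)
      (fun t => max (M.A t.1 t.2.1 * M.A t.2.1 t.2.2 / M.A t.1 t.2.2)
        (M.A t.1 t.2.2 / (M.A t.1 t.2.1 * M.A t.2.1 t.2.2)))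
    simp only [triples, Finset.mem_filter] at htmem
    obtain ⟨-, hlt1, hlt2⟩ := htmem
    have hinj : Function.Injective (![t.1, t.2.1, t.2.2] : Fin 3 → Fin M.n) :=
      vec3_inj (ne_of_lt hlt1) (ne_of_lt (hlt1.trans hlt2)) (ne_of_lt hlt2)
    refine ⟨subPCM M 3 (le_refl 3) ![t.1, t.2.1, t.2.2], ⟨_, hinj, rfl⟩, ?_⟩
    have hK : Kmin (subPCM M 3 (le_refl 3) ![t.1, t.2.1, t.2.2]) = Kmin M := by
      show KminM _ _ = _
      erw [kmin3]
      exact hEq.symm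
    exact ⟨le_of_eq hK.symm, le_of_eq hK⟩
  · -- ¬ MON
    intro hmon
    let σ4 : Fin 3 → Fin M4.n := show Fin 3 → Fin 4 from ![0, 1, 2]
    have hinj : Function.Injective σ4 := vec3_inj (α := Fin 4) (by decide) (by decide) (by decide)
    have hle := hmon M4 (subPCM M4 3 (le_refl 3) σ4) ⟨σ4, hinj, rfl⟩
    unfold Rank5 at hle
    have hT : Kmin (subPCM M4 3 (le_refl 3) σ4) = 2 := by
      show KminM _ _ = _
      erw [kmin3]
      have e : ∀ i j : Fin 3,
          (subPCM M4 3 (le_refl 3) σ4).A i j = A4 (![0,1,2] i) (![0,1,2] j) :=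
        fun i j => rfl
      simp only [e]
      norm_num [A4, Matrix.cons_val_two, Matrix.cons_val_three,
        Matrix.vecHead, Matrix.vecTail]
    have hmem : ((1,2,3) : Fin 4 × Fin 4 × Fin 4) ∈ triples 4 := by decide
    have h1 : KminM (by norm_num : (3:ℕ) ≤ 4) A4
        ≤ max (A4 1 2 * A4 2 3 / A4 1 3) (A4 1 3 / (A4 1 2 * A4 2 3)) :=
      Finset.inf'_le _ hmem
    have h2 : max (A4 1 2 * A4 2 3 / A4 1 3) (A4 1 3 / (A4 1 2 * A4 2 3)) ≤ 1 := by
      norm_num [A4, Matrix.cons_val_two, Matrix.cons_val_three, Matrix.vecHead, Matrix.vecTail]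
    have hM : Kmin M4 ≤ 1 := le_trans h1 h2
    rw [hT] at hle
    linarith
end
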